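/- Let μ, β ∈ ℝ, η > 0, σ > 0, and set σ̂ := √(η² + σ²) and σ̃ := η²/σ̂. For every θ ∈ ℝ, letting z := (θ − μ + β)/σ̂, the double integral ∫_θ^∞ ( ∫_{−∞}^∞ w · (1/η)·φ((w−μ)/η) · (1/σ)·φ((ŵ−w+β)/σ) dw ) dŵ equals μ·(1 − Φ(z)) + σ̃·φ(z). (In the selection model this computes the expected contribution to the utility of candidates whose quality estimate Ŵ = W − β + σε exceeds the threshold θ, where W ∼ N(μ, η²) and ε ∼ N(0,1) are independent.) -/

import Mathlib

noncomputable def gpdf (t : ℝ) : ℝ := Real.exp (-t ^ 2 / 2) / Real.sqrt (2 * Real.pi)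

noncomputable def gcdf (x : ℝ) : ℝ := ∫ t in Set.Iic x, gpdf t

noncomputable def gquant : ℝ → ℝ := Function.invFun gcdf

noncomputable def sHat (η σ : ℝ) : ℝ := Real.sqrt (η ^ 2 + σ ^ 2)

noncomputable def sTil (η σ : ℝ) : ℝ := η ^ 2 / sHat η σ

def Dset (pA α : ℝ) : Set ℝ :=
  {x | x ∈ Set.Ioo (0:ℝ) 1 ∧ (α - pA * x) / (1 - pA) ∈ Set.Ioo (0:ℝ) 1}

noncomputable def Qfun (pA α μA μB sA sB x : ℝ) : ℝ :=
  (1 / α) * (pA * (μA * x + sA * gpdf (gquant (1 - x)))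
    + (1 - pA) * (μB * ((α - pA * x) / (1 - pA))
      + sB * gpdf (gquant (1 - (α - pA * x) / (1 - pA)))))

noncomputable def clampTo (lo hi x : ℝ) : ℝ := min hi (max lo x)

open MeasureTheory Real Set Filter

/-! Put `x = ŵ + β`. Completing the square, the joint density `N(μ, η²)(w) · N(w, σ²)(x)` factors
as the marginal density `N(μ, η² + σ²)(x)` times the posterior density of `w`, which is Gaussian
with mean `μ + η² (x - μ) / (η² + σ²)`. Integrating `w` against it leaves the marginal density
times this posterior mean, an affine function of `x`, and the tail integral of an affine function
against a Gaussian density follows from `∫_z^∞ φ = 1 - Φ(z)` and `∫_z^∞ t φ(t) dt = φ(z)`. -/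

lemma gpdf_eq_exp_neg_mul_sq (t : ℝ) : gpdf t = exp (-(1 / 2) * t ^ 2) / √(2 * π) := by
  rw [gpdf]; ring_nf

lemma gpdf_neg (t : ℝ) : gpdf (-t) = gpdf t := by simp [gpdf]

lemma continuous_gpdf : Continuous gpdf := by
  unfold gpdf; fun_prop

lemma integrable_gpdf : Integrable gpdf := by
  simpa only [← gpdf_eq_exp_neg_mul_sq] using
    (integrable_exp_neg_mul_sq (by norm_num : (0 : ℝ) < 1 / 2)).div_const √(2 * π)

lemma integrable_mul_gpdf : Integrable fun t : ℝ => t * gpdf t := by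
  simpa only [gpdf_eq_exp_neg_mul_sq, mul_div_assoc] using
    (integrable_mul_exp_neg_mul_sq (by norm_num : (0 : ℝ) < 1 / 2)).div_const √(2 * π)

lemma integral_gpdf : ∫ t, gpdf t = 1 := by
  simp only [gpdf_eq_exp_neg_mul_sq]
  rw [integral_div, integral_gaussian, div_div_eq_mul_div, div_one, mul_comm, div_self]
  positivity

lemma integral_mul_gpdf : ∫ t, t * gpdf t = 0 := by
  have h := integral_neg_eq_self (fun t : ℝ => t * gpdf t) volume
  simp only [gpdf_neg, neg_mul, integral_neg] at h
  linarith

lemma hasDerivAt_gpdf (t : ℝ) : HasDerivAt gpdf (-(t * gpdf t)) t := by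
  have h : HasDerivAt (fun x : ℝ => -x ^ 2 / 2) (-t) t :=
    ((hasDerivAt_pow 2 t).fun_neg.div_const 2).congr_deriv (by ring)
  exact (h.exp.div_const √(2 * π)).congr_deriv (by rw [gpdf]; ring)

lemma tendsto_gpdf_atTop : Tendsto gpdf atTop (nhds 0) := by
  have h : Tendsto (fun t : ℝ => -(1 / 2) * t ^ 2) atTop atBot :=
    (tendsto_pow_atTop two_ne_zero).const_mul_atTop_of_neg (by norm_num)
  have h' := (tendsto_exp_atBot.comp h).div_const √(2 * π)
  rw [zero_div] at h'
  exact h'.congr fun t => (gpdf_eq_exp_neg_mul_sq t).symm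

lemma integral_Ioi_gpdf (z : ℝ) : ∫ t in Ioi z, gpdf t = 1 - gcdf z := by
  have h := intervalIntegral.integral_Iic_add_Ioi (b := z) (μ := volume)
    integrable_gpdf.integrableOn integrable_gpdf.integrableOn
  rw [integral_gpdf] at h
  rw [gcdf]
  linarith

lemma integral_Ioi_mul_gpdf (z : ℝ) : ∫ t in Ioi z, t * gpdf t = gpdf z := by
  have h := integral_Ioi_of_hasDerivAt_of_tendsto (a := z) (m := 0) (f := fun t => -gpdf t)
    (f' := fun t => t * gpdf t) continuous_gpdf.neg.continuousWithinAt
    (fun t _ => by simpa using (hasDerivAt_gpdf t).fun_neg)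
    integrable_mul_gpdf.integrableOn (by simpa using tendsto_gpdf_atTop.neg)
  rwa [zero_sub, neg_neg] at h

lemma integral_Ioi_affine_mul_gpdf (p q z : ℝ) :
    ∫ t in Ioi z, (p + q * t) * gpdf t = p * (1 - gcdf z) + q * gpdf z := by
  simp only [add_mul, mul_assoc]
  rw [integral_add (integrable_gpdf.const_mul p).integrableOn
      (integrable_mul_gpdf.const_mul q).integrableOn,
    integral_const_mul, integral_const_mul, integral_Ioi_gpdf, integral_Ioi_mul_gpdf]

lemma gpdf_mul_gpdf {a b c d : ℝ} (h : a ^ 2 + b ^ 2 = c ^ 2 + d ^ 2) :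
    gpdf a * gpdf b = gpdf c * gpdf d := by
  simp only [gpdf, div_mul_div_comm, ← exp_add]
  congr 2
  linarith

/-- The density of `N(m, s²)`, with `s` the standard deviation. -/
noncomputable def gaussDensity (m s x : ℝ) : ℝ := 1 / s * gpdf ((x - m) / s)

lemma integral_comp_sub_div (g : ℝ → ℝ) (a : ℝ) {c : ℝ} (hc : 0 < c) :
    ∫ x, g ((x - a) / c) = c * ∫ y, g y := by
  rw [integral_sub_right_eq_self (fun x => g (x / c)) a, Measure.integral_comp_div,
    abs_of_pos hc, smul_eq_mul]

lemma setIntegral_Ioi_comp_sub_div (g : ℝ → ℝ) (a θ : ℝ) {c : ℝ} (hc : 0 < c) :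
    ∫ x in Ioi θ, g ((x - a) / c) = c * ∫ y in Ioi ((θ - a) / c), g y := by
  rw [← integral_indicator measurableSet_Ioi, ← integral_indicator measurableSet_Ioi,
    ← integral_comp_sub_div _ a hc]
  congr 1
  ext x
  simp only [indicator_apply, mem_Ioi, div_lt_div_iff_of_pos_right hc, sub_lt_sub_iff_right]

lemma integral_mul_gaussDensity (m : ℝ) {s : ℝ} (hs : 0 < s) :
    ∫ x, x * gaussDensity m s x = m := by
  have h (x : ℝ) : x * gaussDensity m s x
      = 1 / s * (m * gpdf ((x - m) / s) + s * ((x - m) / s * gpdf ((x - m) / s))) := by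
    simp only [gaussDensity]; field_simp; ring
  have key := integral_comp_sub_div (fun y => m * gpdf y + s * (y * gpdf y)) m hs
  beta_reduce at key
  simp only [h, integral_const_mul, key]
  rw [integral_add (integrable_gpdf.const_mul m) (integrable_mul_gpdf.const_mul s),
    integral_const_mul, integral_const_mul, integral_gpdf, integral_mul_gpdf]
  simp [hs.ne']

lemma setIntegral_Ioi_gaussDensity_mul_affine (a p q θ : ℝ) {c : ℝ} (hc : 0 < c) :
    ∫ x in Ioi θ, gaussDensity a c x * (p + q * (x - a))
      = p * (1 - gcdf ((θ - a) / c)) + q * c * gpdf ((θ - a) / c) := by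
  have h (x : ℝ) : gaussDensity a c x * (p + q * (x - a))
      = 1 / c * ((p + q * c * ((x - a) / c)) * gpdf ((x - a) / c)) := by
    simp only [gaussDensity]; field_simp
  have key := setIntegral_Ioi_comp_sub_div (fun y => (p + q * c * y) * gpdf y) a θ hc
  beta_reduce at key
  simp only [h, integral_const_mul, key, integral_Ioi_affine_mul_gpdf]
  field_simp

lemma gaussDensity_mul_gaussDensity (μ w x : ℝ) {η σ : ℝ} (hη : 0 < η) (hσ : 0 < σ) :
    gaussDensity μ η w * gaussDensity w σ x
      = gaussDensity μ √(η ^ 2 + σ ^ 2) x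
        * gaussDensity (μ + η ^ 2 / (η ^ 2 + σ ^ 2) * (x - μ)) (η * σ / √(η ^ 2 + σ ^ 2)) w := by
  have hS : 0 < η ^ 2 + σ ^ 2 := by positivity
  have hc : 0 < √(η ^ 2 + σ ^ 2) := sqrt_pos.mpr hS
  have hc2 : √(η ^ 2 + σ ^ 2) ^ 2 = η ^ 2 + σ ^ 2 := sq_sqrt hS.le
  have hsq : ((w - μ) / η) ^ 2 + ((x - w) / σ) ^ 2
      = ((x - μ) / √(η ^ 2 + σ ^ 2)) ^ 2
        + ((w - (μ + η ^ 2 / (η ^ 2 + σ ^ 2) * (x - μ))) / (η * σ / √(η ^ 2 + σ ^ 2))) ^ 2 := by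
    simp only [div_pow, mul_pow, hc2]
    field_simp
    ring
  simp only [gaussDensity]
  rw [mul_mul_mul_comm, gpdf_mul_gpdf hsq, mul_mul_mul_comm (1 / √_)]
  congr 1
  field_simp

lemma integral_mul_gaussDensity_mul_gaussDensity (μ x : ℝ) {η σ : ℝ} (hη : 0 < η) (hσ : 0 < σ) :
    ∫ w, w * gaussDensity μ η w * gaussDensity w σ x
      = gaussDensity μ √(η ^ 2 + σ ^ 2) x * (μ + η ^ 2 / (η ^ 2 + σ ^ 2) * (x - μ)) := by
  simp only [mul_assoc, gaussDensity_mul_gaussDensity μ _ x hη hσ, mul_left_comm _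
    (gaussDensity μ √(η ^ 2 + σ ^ 2) x), integral_const_mul]
  rw [integral_mul_gaussDensity _ (by positivity)]

/-- the double Gaussian integral giving the expected utility
contribution of candidates whose estimate exceeds the threshold `θ`. -/
theorem stmt11 (μ β η σ θ : ℝ) (hη : 0 < η) (hσ : 0 < σ) :
    (∫ w' in Set.Ici θ, ∫ w : ℝ,
        w * ((1 / η) * gpdf ((w - μ) / η)) * ((1 / σ) * gpdf ((w' - w + β) / σ)))
    = μ * (1 - gcdf ((θ - μ + β) / Real.sqrt (η ^ 2 + σ ^ 2)))
      + (η ^ 2 / Real.sqrt (η ^ 2 + σ ^ 2)) * gpdf ((θ - μ + β) / Real.sqrt (η ^ 2 + σ ^ 2)) := by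
  have hS : 0 < η ^ 2 + σ ^ 2 := by positivity
  have hc : 0 < √(η ^ 2 + σ ^ 2) := sqrt_pos.mpr hS
  have inner (w' : ℝ) :
      ∫ w, w * (1 / η * gpdf ((w - μ) / η)) * (1 / σ * gpdf ((w' - w + β) / σ))
        = gaussDensity (μ - β) √(η ^ 2 + σ ^ 2) w'
          * (μ + η ^ 2 / (η ^ 2 + σ ^ 2) * (w' - (μ - β))) := by
    calc _ = ∫ w, w * gaussDensity μ η w * gaussDensity w σ (w' + β) := by
          simp only [gaussDensity, add_sub_right_comm]
      _ = _ := integral_mul_gaussDensity_mul_gaussDensity μ (w' + β) hη hσ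
      _ = _ := by simp only [gaussDensity, sub_sub_eq_add_sub]
  rw [setIntegral_congr_fun measurableSet_Ici fun w' _ => inner w', integral_Ici_eq_integral_Ioi,
    setIntegral_Ioi_gaussDensity_mul_affine _ _ _ _ hc,
    show θ - (μ - β) = θ - μ + β by ring]
  congr 2
  rw [div_mul_eq_mul_div, div_eq_div_iff hS.ne' hc.ne', mul_assoc, mul_self_sqrt hS.le]
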